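/- arXiv:2210.16466 — 6 statements merged into one kernel-verified Lean document; each statement's English description precedes it below -/
import Mathlib

section
/- Let G be a graph with n vertices and m edges and let α ∈ [0,1]. Then the largest eigenvalue λ_α(G) of A_α(G) satisfies 2m/n ≤ λ_α(G) ≤ max over edges uv of (α·deg(u) + (1−α)·deg(v)), and the lower bound is attained with equality if and only if G is regular. -/
open scoped Classical

/-- The matrix `A_α(G) = α·D(G) + (1−α)·A(G)` over `ℝ`. -/
noncomputable def Aalpha {V : Type*} [Fintype V] (G : SimpleGraph V) (α : ℝ) : Matrix V V ℝ :=
  α • Matrix.diagonal (fun v => (G.degree v : ℝ)) +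
    (1 - α) • (Matrix.of fun i j => if G.Adj i j then (1 : ℝ) else 0)

/-- `lam` is the largest real eigenvalue (spectral radius) of the real symmetric matrix `M`. -/
def IsSpectralRadius {V : Type*} [Fintype V] (M : Matrix V V ℝ) (lam : ℝ) : Prop :=
  (∃ x : V → ℝ, x ≠ 0 ∧ M.mulVec x = lam • x) ∧
    ∀ μ : ℝ, (∃ x : V → ℝ, x ≠ 0 ∧ M.mulVec x = μ • x) → μ ≤ lam


/-! Since `A_α(G)` is symmetric with largest eigenvalue `λ`, the matrix `λ • 1 - A_α(G)` is
positive semidefinite. Testing it on the all-ones vector gives `2m = 𝟙 ⬝ᵥ A_α 𝟙 ≤ λ n`, and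
equality forces `A_α 𝟙 = λ • 𝟙`, i.e. every degree equals `λ`.

For the upper bound take an eigenvector `y` for `λ` whose maximal entry `y u` is positive, and a
neighbour `v` of `u` maximising `y` on `N(u)`. The eigenvalue equations at `u` and `v` give
`(λ - α d_u) y_u ≤ (1 - α) d_u y_v` and `(λ - α d_v) y_v ≤ (1 - α) d_v y_u`; multiplying them
rules out that `λ` exceeds both `α d_u + (1 - α) d_v` and `α d_v + (1 - α) d_u`. The equation at
`u` alone gives `λ ≤ d_u`, which settles the equality case for regular graphs. -/

open Matrix Finset

namespace Matrix

variable {n : Type*} [Fintype n] [DecidableEq n]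

theorem IsHermitian.posSemidef_smul_one_sub {M : Matrix n n ℝ} (hM : M.IsHermitian) {lam : ℝ}
    (hlam : ∀ μ : ℝ, (∃ x : n → ℝ, x ≠ 0 ∧ M *ᵥ x = μ • x) → μ ≤ lam) :
    (lam • (1 : Matrix n n ℝ) - M).PosSemidef := by
  have hN : (lam • (1 : Matrix n n ℝ) - M).IsHermitian :=
    (isHermitian_one.smul (IsSelfAdjoint.all lam)).sub hM
  refine hN.posSemidef_iff_eigenvalues_nonneg.mpr fun i => ?_
  have hv := hN.mulVec_eigenvectorBasis i
  rw [sub_mulVec, smul_mulVec, one_mulVec, sub_eq_iff_eq_add, ← sub_eq_iff_eq_add', ← sub_smul]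
    at hv
  have hne : (hN.eigenvectorBasis i : n → ℝ) ≠ 0 := fun h =>
    hN.eigenvectorBasis.orthonormal.ne_zero i (by ext j; exact congrFun h j)
  simpa using hlam _ ⟨_, hne, hv.symm⟩

theorem smul_one_sub_dotProduct_mulVec (M : Matrix n n ℝ) (lam : ℝ) (x : n → ℝ) :
    x ⬝ᵥ (lam • (1 : Matrix n n ℝ) - M) *ᵥ x = lam * (x ⬝ᵥ x) - x ⬝ᵥ M *ᵥ x := by
  rw [sub_mulVec, smul_mulVec, one_mulVec, dotProduct_sub, dotProduct_smul, smul_eq_mul]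

end Matrix

namespace IsSpectralRadius

variable {n : Type*} [Fintype n] {M : Matrix n n ℝ} {lam : ℝ}

theorem dotProduct_mulVec_le (hM : M.IsHermitian) (h : IsSpectralRadius M lam) (x : n → ℝ) :
    x ⬝ᵥ M *ᵥ x ≤ lam * (x ⬝ᵥ x) := by
  have := (hM.posSemidef_smul_one_sub h.2).dotProduct_mulVec_nonneg x
  rw [star_trivial, smul_one_sub_dotProduct_mulVec] at this
  linarith

theorem mulVec_eq_of_dotProduct_mulVec_eq (hM : M.IsHermitian) (h : IsSpectralRadius M lam)
    {x : n → ℝ} (hx : x ⬝ᵥ M *ᵥ x = lam * (x ⬝ᵥ x)) : M *ᵥ x = lam • x := by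
  have := ((hM.posSemidef_smul_one_sub h.2).dotProduct_mulVec_zero_iff x).mp
    (by rw [star_trivial, smul_one_sub_dotProduct_mulVec, hx, sub_self])
  rwa [sub_mulVec, smul_mulVec, one_mulVec, sub_eq_zero, eq_comm] at this

theorem exists_eigenvector_pos_isMax (h : IsSpectralRadius M lam) :
    ∃ y : n → ℝ, M *ᵥ y = lam • y ∧ ∃ u, 0 < y u ∧ ∀ w, y w ≤ y u := by
  obtain ⟨x, hx0, hx⟩ := h.1
  obtain ⟨w₀, hw₀⟩ := Function.ne_iff.mp hx0
  obtain ⟨y, hy, hyw₀⟩ : ∃ y : n → ℝ, M *ᵥ y = lam • y ∧ 0 < y w₀ := by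
    rcases (hw₀ : x w₀ ≠ 0).lt_or_gt with hneg | hpos
    · exact ⟨-x, by rw [mulVec_neg, hx, smul_neg], by simpa using hneg⟩
    · exact ⟨x, hx, hpos⟩
  obtain ⟨u, -, hu⟩ := univ.exists_max_image y ⟨w₀, mem_univ _⟩
  exact ⟨y, hy, u, hyw₀.trans_le (hu w₀ (mem_univ _)), fun w => hu w (mem_univ w)⟩

end IsSpectralRadius

theorem le_or_le_of_sub_mul_le {α β p q a b lam : ℝ} (hβ : 0 ≤ β) (hp : 0 ≤ p) (hq : 0 ≤ q)
    (ha : 0 < a) (h₁ : (lam - α * p) * a ≤ β * p * b) (h₂ : (lam - α * q) * b ≤ β * q * a) :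
    lam ≤ α * p + β * q ∨ lam ≤ α * q + β * p := by
  by_contra! h
  have hb : 0 < b := by nlinarith [mul_nonneg hβ hp, mul_nonneg hβ hq]
  nlinarith [mul_nonneg hβ hp, mul_nonneg hβ hq, mul_pos ha hb]

namespace SimpleGraph

variable {V : Type*} [Fintype V] (G : SimpleGraph V) (α : ℝ)

theorem Aalpha_eq : Aalpha G α = α • G.degMatrix ℝ + (1 - α) • G.adjMatrix ℝ := by
  ext i j
  simp [Aalpha, degMatrix, adjMatrix]

theorem Aalpha_isHermitian : (Aalpha G α).IsHermitian := by
  rw [Aalpha_eq]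
  exact ((G.isHermitian_degMatrix ℝ).smul (IsSelfAdjoint.all α)).add
    ((G.isHermitian_adjMatrix ℝ).smul (IsSelfAdjoint.all (1 - α)))

theorem Aalpha_mulVec_apply (x : V → ℝ) (u : V) :
    (Aalpha G α *ᵥ x) u = α * G.degree u * x u + (1 - α) * ∑ w ∈ G.neighborFinset u, x w := by
  simp [Aalpha_eq, add_mulVec, smul_mulVec, degMatrix_mulVec_apply, adjMatrix_mulVec_apply,
    mul_assoc]

theorem Aalpha_mulVec_one : Aalpha G α *ᵥ 1 = fun u => (G.degree u : ℝ) := by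
  ext u
  simp only [Aalpha_mulVec_apply, Pi.one_apply, mul_one, sum_const, card_neighborFinset_eq_degree,
    nsmul_eq_mul]
  ring

theorem one_dotProduct_Aalpha_mulVec_one : 1 ⬝ᵥ Aalpha G α *ᵥ 1 = 2 * #G.edgeFinset := by
  rw [Aalpha_mulVec_one, one_dotProduct]
  exact_mod_cast G.sum_degrees_eq_twice_card_edges

variable {G α} {lam : ℝ} {y : V → ℝ} {u : V}

theorem IsRegularOfDegree.two_mul_card_edgeFinset {d : ℕ} (h : G.IsRegularOfDegree d) :
    2 * #G.edgeFinset = Fintype.card V * d := by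
  simp [← G.sum_degrees_eq_twice_card_edges, h.degree_eq]

theorem two_mul_card_edgeFinset_le (h : IsSpectralRadius (Aalpha G α) lam) :
    2 * #G.edgeFinset ≤ lam * Fintype.card V := by
  simpa [one_dotProduct_Aalpha_mulVec_one, one_dotProduct_one] using
    h.dotProduct_mulVec_le (Aalpha_isHermitian G α) 1

theorem degree_eq_of_two_mul_card_edgeFinset_eq (h : IsSpectralRadius (Aalpha G α) lam)
    (heq : 2 * #G.edgeFinset = lam * Fintype.card V) (v : V) : G.degree v = lam := by
  have hones := h.mulVec_eq_of_dotProduct_mulVec_eq (Aalpha_isHermitian G α) (x := 1)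
    (by rw [one_dotProduct_Aalpha_mulVec_one, one_dotProduct_one, heq])
  simpa [Aalpha_mulVec_one] using congrFun hones v

theorem eigenvalue_mul_le_of_le_on_neighbors (hα : α ≤ 1) (hy : Aalpha G α *ᵥ y = lam • y)
    {b : ℝ} (hb : ∀ w ∈ G.neighborFinset u, y w ≤ b) :
    (lam - α * G.degree u) * y u ≤ (1 - α) * G.degree u * b := by
  have hu := congrFun hy u
  rw [Aalpha_mulVec_apply, Pi.smul_apply, smul_eq_mul] at hu
  have hsum := sum_le_card_nsmul _ _ _ hb
  rw [card_neighborFinset_eq_degree, nsmul_eq_mul] at hsum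
  nlinarith [mul_le_mul_of_nonneg_left hsum (sub_nonneg.mpr hα)]

theorem eigenvalue_le_degree_of_isMax (hα : α ≤ 1) (hy : Aalpha G α *ᵥ y = lam • y)
    (hu : 0 < y u) (hmax : ∀ w, y w ≤ y u) : lam ≤ G.degree u := by
  have := eigenvalue_mul_le_of_le_on_neighbors hα hy (u := u) fun w _ => hmax w
  nlinarith

theorem exists_adj_eigenvalue_le_of_isMax (hα : α ≤ 1) (hy : Aalpha G α *ᵥ y = lam • y)
    (hu : 0 < y u) (hmax : ∀ w, y w ≤ y u) (hdeg : 0 < G.degree u) :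
    ∃ u v : V, G.Adj u v ∧ lam ≤ α * G.degree u + (1 - α) * G.degree v := by
  obtain ⟨v, hv, hvmax⟩ := (G.neighborFinset u).exists_max_image y
    (by rwa [← card_pos, card_neighborFinset_eq_degree])
  have huv : G.Adj u v := (G.mem_neighborFinset u v).mp hv
  rcases le_or_le_of_sub_mul_le (sub_nonneg.mpr hα) (Nat.cast_nonneg _) (Nat.cast_nonneg _) hu
    (eigenvalue_mul_le_of_le_on_neighbors hα hy hvmax)
    (eigenvalue_mul_le_of_le_on_neighbors hα hy fun w _ => hmax w) with h | h
  · exact ⟨u, v, huv, h⟩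
  · exact ⟨v, u, huv.symm, h⟩

end SimpleGraph

open SimpleGraph in
theorem stmt2_general {V : Type*} [Fintype V] (G : SimpleGraph V)
    (α : ℝ) (hα : α ∈ Set.Icc (0 : ℝ) 1)
    (lam : ℝ) (hlam : IsSpectralRadius (Aalpha G α) lam) :
    (2 * (G.edgeFinset.card : ℝ) / (Fintype.card V : ℝ) ≤ lam) ∧
    (G.edgeFinset.Nonempty →
      ∃ u v : V, G.Adj u v ∧ lam ≤ α * (G.degree u : ℝ) + (1 - α) * (G.degree v : ℝ)) ∧
    (2 * (G.edgeFinset.card : ℝ) / (Fintype.card V : ℝ) = lam ↔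
      ∃ d : ℕ, G.IsRegularOfDegree d) := by
  obtain ⟨y, hy, u, hyu, hmax⟩ := hlam.exists_eigenvector_pos_isMax
  have hn : (0 : ℝ) < Fintype.card V := by exact_mod_cast Fintype.card_pos_iff.mpr ⟨u⟩
  have hlower : 2 * (#G.edgeFinset : ℝ) / Fintype.card V ≤ lam :=
    (div_le_iff₀ hn).mpr (two_mul_card_edgeFinset_le hlam)
  have hlam_le_deg := eigenvalue_le_degree_of_isMax hα.2 hy hyu hmax
  refine ⟨hlower, fun hE => ?_, ⟨fun heq => ?_, fun ⟨d, hd⟩ => ?_⟩⟩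
  · have hm : (0 : ℝ) < 2 * #G.edgeFinset / Fintype.card V := by
      have := hE.card_pos; positivity
    exact exists_adj_eigenvalue_le_of_isMax hα.2 hy hyu hmax
      (by exact_mod_cast hm.trans_le (hlower.trans hlam_le_deg))
  · have hdeg := degree_eq_of_two_mul_card_edgeFinset_eq hlam ((div_eq_iff hn.ne').mp heq)
    exact ⟨G.degree u, fun w => by exact_mod_cast (hdeg w).trans (hdeg u).symm⟩
  · have hd_eq : 2 * (#G.edgeFinset : ℝ) / Fintype.card V = d := by
      rw [div_eq_iff hn.ne']; exact_mod_cast hd.two_mul_card_edgeFinset.trans (mul_comm _ _)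
    rw [hd.degree_eq] at hlam_le_deg
    linarith

theorem stmt2 {V : Type*} [Fintype V] [Nonempty V] (G : SimpleGraph V)
    (α : ℝ) (hα : α ∈ Set.Icc (0 : ℝ) 1)
    (lam : ℝ) (hlam : IsSpectralRadius (Aalpha G α) lam) :
    (2 * (G.edgeFinset.card : ℝ) / (Fintype.card V : ℝ) ≤ lam) ∧
    (G.edgeFinset.Nonempty →
      ∃ u v : V, G.Adj u v ∧ lam ≤ α * (G.degree u : ℝ) + (1 - α) * (G.degree v : ℝ)) ∧
    (2 * (G.edgeFinset.card : ℝ) / (Fintype.card V : ℝ) = lam ↔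
      ∃ d : ℕ, G.IsRegularOfDegree d) :=
  stmt2_general G α hα lam hlam
end

section
/- Let G be a connected graph, u, v ∈ V(G), and Y ⊆ N_G(u) \ (N_G(v) ∪ {v}) with Y ≠ ∅. Let G' = G − {uw : w ∈ Y} + {vw : w ∈ Y}. If X is a positive eigenvector of A_α(G) for λ_α(G) with x_v ≥ x_u, then λ_α(G') > λ_α(G) for α ∈ [0,1). -/
open scoped Classical

/-!
Moving the edges `uw` (`w ∈ Y`) to `vw` changes the quadratic form `xᵀ A_α x` by
`∑_{w ∈ Y} (α (x_v² - x_u²) + 2 (1 - α) x_w (x_v - x_u)) ≥ 0`, so `xᵀ A_α(G') x ≥ λ xᵀ x` and the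
Rayleigh principle gives `λ_α(G') ≥ λ`. Equality would make `x` an eigenvector of `A_α(G')` for `λ`,
which fails at `u`: the row of `u` loses the positive terms `α x_u + (1 - α) x_w`, `w ∈ Y`.
-/

open Matrix

namespace IsSpectralRadius

variable {n : Type*} [Fintype n] {M : Matrix n n ℝ} {μ : ℝ}

theorem posSemidef_smul_one_sub (hM : M.IsHermitian) (h : IsSpectralRadius M μ) :
    (μ • 1 - M).PosSemidef := by
  have hN : (μ • 1 - M).IsHermitian := (isHermitian_one.smul (IsSelfAdjoint.all μ)).sub hM
  refine hN.posSemidef_iff_eigenvalues_nonneg.mpr fun i => ?_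
  have hv : M *ᵥ ⇑(hN.eigenvectorBasis i) =
      (μ - hN.eigenvalues i) • ⇑(hN.eigenvectorBasis i) := by
    have := hN.mulVec_eigenvectorBasis i
    rw [sub_mulVec, smul_mulVec, one_mulVec] at this
    rw [sub_smul, ← this]
    abel
  have hle := h.2 _ ⟨_, fun h0 => hN.eigenvectorBasis.toBasis.ne_zero i (by simpa using h0), hv⟩
  simp only [Pi.zero_apply]
  linarith

theorem lt_of_le_dotProduct_mulVec (hM : M.IsHermitian) (h : IsSpectralRadius M μ) {c : ℝ}
    {x : n → ℝ} (hle : c * (x ⬝ᵥ x) ≤ x ⬝ᵥ M *ᵥ x) (hne : M *ᵥ x ≠ c • x) : c < μ := by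
  by_contra! hμc
  rcases eq_or_ne x 0 with rfl | hx0
  · simp at hne
  have hxx : 0 < x ⬝ᵥ x := by simpa using dotProduct_star_self_pos_iff.mpr hx0
  have hpsd := h.posSemidef_smul_one_sub hM
  have hform : x ⬝ᵥ (μ • 1 - M) *ᵥ x = μ * (x ⬝ᵥ x) - x ⬝ᵥ M *ᵥ x := by
    simp [sub_mulVec, smul_mulVec, dotProduct_sub]
  have hzero : x ⬝ᵥ (μ • 1 - M) *ᵥ x = 0 := by
    have hnonneg := hpsd.dotProduct_mulVec_nonneg x
    simp only [star_trivial] at hnonneg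
    rw [hform] at hnonneg ⊢
    nlinarith
  have hMx : M *ᵥ x = μ • x := by
    have hker := (hpsd.dotProduct_mulVec_zero_iff x).mp (by simpa using hzero)
    rwa [sub_mulVec, smul_mulVec, one_mulVec, sub_eq_zero, eq_comm] at hker
  have hcμ : c = μ := by nlinarith
  exact hne (hcμ ▸ hMx)

end IsSpectralRadius

section Aalpha

variable {V : Type*} [Fintype V] (H : SimpleGraph V) (α : ℝ)

theorem Aalpha_isHermitian : (Aalpha H α).IsHermitian := by
  have hadj : (H.adjMatrix ℝ).IsHermitian := by
    rw [IsHermitian, conjTranspose_eq_transpose_of_trivial]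
    exact H.isSymm_adjMatrix
  exact ((isHermitian_diagonal _).smul (IsSelfAdjoint.all α)).add
    (hadj.smul (IsSelfAdjoint.all (1 - α)))

theorem Aalpha_mulVec_apply (x : V → ℝ) (a : V) :
    (Aalpha H α *ᵥ x) a = ∑ b, if H.Adj a b then α * x a + (1 - α) * x b else 0 := by
  have hdeg : (H.degree a : ℝ) = ∑ b, if H.Adj a b then 1 else 0 := by
    simp [← SimpleGraph.card_neighborFinset_eq_degree, SimpleGraph.neighborFinset_eq_filter]
  rw [Aalpha, add_mulVec, smul_mulVec, smul_mulVec, Pi.add_apply, Pi.smul_apply, Pi.smul_apply,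
    mulVec_diagonal, hdeg]
  simp only [mulVec, dotProduct, of_apply, smul_eq_mul, Finset.sum_mul, Finset.mul_sum,
    ← Finset.sum_add_distrib]
  refine Finset.sum_congr rfl fun b _ => ?_
  split_ifs <;> ring

theorem dotProduct_Aalpha_mulVec (x : V → ℝ) :
    x ⬝ᵥ Aalpha H α *ᵥ x =
      ∑ a, ∑ b, if H.Adj a b then x a * (α * x a + (1 - α) * x b) else 0 := by
  simp only [dotProduct, Aalpha_mulVec_apply, Finset.mul_sum, mul_ite, mul_zero]

end Aalpha

section MoveEdges

variable {V : Type*} {G G' : SimpleGraph V} {u v : V} {Y : Set V}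
  (hY : Y ⊆ G.neighborSet u \ (G.neighborSet v ∪ {v}))
  (hG' : ∀ a b : V, G'.Adj a b ↔
      ((G.Adj a b ∧ ¬(a = u ∧ b ∈ Y) ∧ ¬(b = u ∧ a ∈ Y)) ∨
        (a = v ∧ b ∈ Y) ∨ (b = v ∧ a ∈ Y)))
include hY hG'

theorem ite_adj_moveEdges (F : V → V → ℝ) (a b : V) :
    (if G'.Adj a b then F a b else 0) =
      (if G.Adj a b then F a b else 0)
        + (if a = v ∧ b ∈ Y then F a b else 0) + (if b = v ∧ a ∈ Y then F a b else 0)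
        - (if a = u ∧ b ∈ Y then F a b else 0) - (if b = u ∧ a ∈ Y then F a b else 0) := by
  have hYu : ∀ w ∈ Y, G.Adj u w := fun w hw => (hY hw).1
  have hYv : ∀ w ∈ Y, w ≠ v ∧ ¬G.Adj v w := fun w hw => by simpa [not_or] using (hY hw).2
  have huY : u ∉ Y := fun hu => (hYu u hu).ne rfl
  rw [hG' a b]
  split_ifs <;> grind [SimpleGraph.adj_comm]

variable [Fintype V]

theorem sum_sum_ite_adj_moveEdges (F : V → V → ℝ) :
    ∑ a, ∑ b, (if G'.Adj a b then F a b else 0) =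
      ∑ a, ∑ b, (if G.Adj a b then F a b else 0) +
        ∑ w ∈ Y.toFinset, (F v w + F w v - F u w - F w u) := by
  simp only [ite_adj_moveEdges hY hG', Finset.sum_add_distrib, Finset.sum_sub_distrib, ite_and,
    Finset.sum_ite_irrel, Finset.sum_const_zero, Finset.sum_ite_eq', Finset.mem_univ, if_true,
    ← Finset.sum_filter, Set.filter_mem_univ_eq_toFinset]
  ring

theorem sum_ite_adj_moveEdges_left (huv : u ≠ v) (f : V → ℝ) :
    ∑ b, (if G'.Adj u b then f b else 0) =
      ∑ b, (if G.Adj u b then f b else 0) - ∑ w ∈ Y.toFinset, f w := by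
  have huY : u ∉ Y := fun hu => (hY hu).1.ne rfl
  simp [ite_adj_moveEdges hY hG' (fun _ b => f b), huv, huY, Finset.sum_sub_distrib,
    ← Finset.sum_filter, Set.filter_mem_univ_eq_toFinset]

end MoveEdges

theorem stmt6_general {V : Type*} [Fintype V] (G G' : SimpleGraph V)
    (u v : V) (Y : Set V)
    (hY : Y ⊆ G.neighborSet u \ (G.neighborSet v ∪ {v})) (hYne : Y.Nonempty)
    (hG' : ∀ a b : V, G'.Adj a b ↔
      ((G.Adj a b ∧ ¬(a = u ∧ b ∈ Y) ∧ ¬(b = u ∧ a ∈ Y)) ∨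
        (a = v ∧ b ∈ Y) ∨ (b = v ∧ a ∈ Y)))
    (α : ℝ) (hα : α ∈ Set.Ico (0 : ℝ) 1)
    (lam lam' : ℝ)
    (hlam' : IsSpectralRadius (Aalpha G' α) lam')
    (x : V → ℝ) (hx : ∀ w, 0 < x w)
    (hev : (Aalpha G α).mulVec x = lam • x)
    (hxy : x u ≤ x v) :
    lam < lam' := by
  obtain ⟨hα0, hα1⟩ := hα
  obtain ⟨w₀, hw₀⟩ := hYne
  have huv : u ≠ v := by
    rintro rfl
    exact (hY hw₀).2 (Or.inl (hY hw₀).1)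
  have hform : lam * (x ⬝ᵥ x) ≤ x ⬝ᵥ Aalpha G' α *ᵥ x := by
    rw [dotProduct_Aalpha_mulVec, sum_sum_ite_adj_moveEdges hY hG', ← dotProduct_Aalpha_mulVec,
      hev, dotProduct_smul, smul_eq_mul]
    refine le_add_of_nonneg_right (Finset.sum_nonneg fun w _ => ?_)
    nlinarith [mul_nonneg hα0 (mul_nonneg (sub_nonneg.2 hxy) (add_pos (hx u) (hx v)).le),
      mul_nonneg (sub_nonneg.2 hα1.le) (mul_nonneg (hx w).le (sub_nonneg.2 hxy))]
  have hrow : (Aalpha G' α *ᵥ x) u < lam * x u := by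
    rw [Aalpha_mulVec_apply, sum_ite_adj_moveEdges_left hY hG' huv, ← Aalpha_mulVec_apply, hev]
    refine sub_lt_self _ (Finset.sum_pos (fun w _ => ?_) ⟨w₀, by simpa using hw₀⟩)
    nlinarith [hx u, hx w]
  refine hlam'.lt_of_le_dotProduct_mulVec (Aalpha_isHermitian G' α) hform fun h => ?_
  simp [h] at hrow

theorem stmt6 {V : Type*} [Fintype V] (G G' : SimpleGraph V) (hG : G.Connected)
    (u v : V) (Y : Set V)
    (hY : Y ⊆ G.neighborSet u \ (G.neighborSet v ∪ {v})) (hYne : Y.Nonempty)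
    (hG' : ∀ a b : V, G'.Adj a b ↔
      ((G.Adj a b ∧ ¬(a = u ∧ b ∈ Y) ∧ ¬(b = u ∧ a ∈ Y)) ∨
        (a = v ∧ b ∈ Y) ∨ (b = v ∧ a ∈ Y)))
    (α : ℝ) (hα : α ∈ Set.Ico (0 : ℝ) 1)
    (lam lam' : ℝ) (hlam : IsSpectralRadius (Aalpha G α) lam)
    (hlam' : IsSpectralRadius (Aalpha G' α) lam')
    (x : V → ℝ) (hx : ∀ w, 0 < x w)
    (hev : (Aalpha G α).mulVec x = lam • x)
    (hxy : x u ≤ x v) :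
    lam < lam' :=
  stmt6_general G G' u v Y hY hYne hG' α hα lam lam' hlam' x hx hev hxy
end

section
/- Let M be a nonnegative square real matrix admitting an equitable partition with equitable quotient matrix B (each block of M has constant row sums, recorded in B), and suppose B is irreducible. Then the spectral radius of M equals the spectral radius of B. -/
/-!
Let `S = (1 : Matrix (Fin t) (Fin t) ℝ).submatrix π id` be the indicator matrix of the
partition. Equitability says `M S = S B`, hence `M ^ k S = S B ^ k` for every `k`. Since `S`
has exactly one `1` in each row, the row sums of `M ^ k` are the row sums of `B ^ k` read
through `π`; as all entries are nonnegative, this makes the `ℓ∞` operator norms of `M ^ k` and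
`B ^ k` equal. Gelfand's formula
`ρ(A) = lim ‖A ^ k‖ ^ (1 / k)` then gives `ρ(M) = ρ(B)`.
-/

/-- The spectral radius of a real matrix: the supremum of the moduli of its
complex eigenvalues (roots of the characteristic polynomial over `ℂ`). -/
noncomputable def specRad {m : Type*} [Fintype m] [DecidableEq m]
    (M : Matrix m m ℝ) : ℝ :=
  sSup {r : ℝ | ∃ μ : ℂ, (M.map Complex.ofReal).charpoly.IsRoot μ ∧ r = ‖μ‖}

open Matrix Finset
open scoped NNReal

namespace Matrix

variable {m n R : Type*} [Fintype m] [Fintype n]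

theorem pow_mul_eq_mul_pow_of_mul_eq [DecidableEq m] [DecidableEq n] [Semiring R]
    {M : Matrix m m R} {P : Matrix m n R} {B : Matrix n n R} (h : M * P = P * B) (k : ℕ) :
    M ^ k * P = P * B ^ k := by
  induction k with
  | zero => simp
  | succ k ih => rw [pow_succ', Matrix.mul_assoc, ih, ← Matrix.mul_assoc, h, Matrix.mul_assoc,
      ← pow_succ']

theorem mul_one_submatrix_eq_of_sum_fiber [DecidableEq n] [NonAssocSemiring R] {π : m → n}
    {M : Matrix m m R} {B : Matrix n n R}
    (h : ∀ a j, ∑ b ∈ univ.filter (fun b => π b = j), M a b = B (π a) j) :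
    M * (1 : Matrix n n R).submatrix π id = (1 : Matrix n n R).submatrix π id * B := by
  ext a j
  simp [mul_apply, one_apply, ← h a j, Finset.sum_filter]

theorem sum_apply_eq_of_mul_one_submatrix [DecidableEq n] [NonAssocSemiring R] {π : m → n}
    {M : Matrix m m R} {B : Matrix n n R}
    (h : M * (1 : Matrix n n R).submatrix π id = (1 : Matrix n n R).submatrix π id * B) (a : m) :
    ∑ b, M a b = ∑ j, B (π a) j := by
  have := congr_arg (fun N => ∑ j, N a j) h
  simpa [mul_apply, one_apply, Finset.sum_comm (γ := n)] using this

theorem apply_nonneg_of_mul_one_submatrix [DecidableEq n] [Semiring R] [PartialOrder R]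
    [IsOrderedRing R] {π : m → n} (hπ : Function.Surjective π) {M : Matrix m m R}
    {B : Matrix n n R} (hM : ∀ a b, 0 ≤ M a b)
    (h : M * (1 : Matrix n n R).submatrix π id = (1 : Matrix n n R).submatrix π id * B)
    (i j : n) : 0 ≤ B i j := by
  obtain ⟨a, rfl⟩ := hπ i
  have hB : B (π a) j = (M * (1 : Matrix n n R).submatrix π id) a j := by
    rw [h]
    simp [mul_apply, one_apply]
  rw [hB, mul_apply]
  exact sum_nonneg fun b _ =>
    mul_nonneg (hM a b) (by rw [submatrix_apply, one_apply]; split_ifs <;> simp)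

theorem map_ofReal_pow [DecidableEq m] (A : Matrix m m ℝ) (k : ℕ) :
    (A.map Complex.ofReal) ^ k = (A ^ k).map Complex.ofReal :=
  (map_pow Complex.ofRealHom.mapMatrix A k).symm

section LinftyOpNorm

attribute [local instance] Matrix.linftyOpNormedAddCommGroup

theorem linfty_opNNNorm_eq_of_mul_one_submatrix [DecidableEq n] {π : m → n}
    (hπ : Function.Surjective π) {M : Matrix m m ℝ} {B : Matrix n n ℝ} (hM : ∀ a b, 0 ≤ M a b)
    (h : M * (1 : Matrix n n ℝ).submatrix π id = (1 : Matrix n n ℝ).submatrix π id * B) :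
    ‖M‖₊ = ‖B‖₊ := by
  have hB := apply_nonneg_of_mul_one_submatrix hπ hM h
  have hrow (a : m) : ∑ b, ‖M a b‖₊ = ∑ j, ‖B (π a) j‖₊ := by
    apply NNReal.coe_injective
    push_cast
    simp only [Real.norm_of_nonneg (hM _ _), Real.norm_of_nonneg (hB _ _)]
    exact sum_apply_eq_of_mul_one_submatrix h a
  rw [linfty_opNNNorm_def, linfty_opNNNorm_def, Finset.sup_congr rfl fun a _ => hrow a]
  exact (Finset.sup_image univ π fun i => ∑ j, ‖B i j‖₊).symm.trans
    (by rw [Finset.image_univ_of_surjective hπ])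

theorem linfty_opNNNorm_map_ofReal (A : Matrix m n ℝ) :
    ‖A.map Complex.ofReal‖₊ = ‖A‖₊ := by
  simp [linfty_opNNNorm_def, Complex.nnnorm_real]

end LinftyOpNorm

end Matrix

theorem spectralRadius_eq_of_nnnorm_pow_eq {A B : Type*} [NormedRing A] [NormedAlgebra ℂ A]
    [CompleteSpace A] [NormedRing B] [NormedAlgebra ℂ B] [CompleteSpace B] {a : A} {b : B}
    (h : ∀ k : ℕ, ‖a ^ k‖₊ = ‖b ^ k‖₊) : spectralRadius ℂ a = spectralRadius ℂ b := by
  refine tendsto_nhds_unique (spectrum.pow_nnnorm_pow_one_div_tendsto_nhds_spectralRadius a) ?_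
  simpa only [h] using spectrum.pow_nnnorm_pow_one_div_tendsto_nhds_spectralRadius b

theorem specRad_eq_toReal_spectralRadius {m : Type*} [Fintype m] [DecidableEq m]
    (A : Matrix m m ℝ) : specRad A = (spectralRadius ℂ (A.map Complex.ofReal)).toReal := by
  set S := spectrum ℂ (A.map Complex.ofReal)
  have hset : {r : ℝ | ∃ μ : ℂ, (A.map Complex.ofReal).charpoly.IsRoot μ ∧ r = ‖μ‖}
      = (fun x : ℝ≥0 => (x : ℝ)) '' ((fun μ : ℂ => ‖μ‖₊) '' S) := by
    ext r
    simp [S, mem_spectrum_iff_isRoot_charpoly, eq_comm]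
  have hrad : spectralRadius ℂ (A.map Complex.ofReal) = ↑(sSup ((fun μ : ℂ => ‖μ‖₊) '' S)) := by
    rw [ENNReal.coe_sSup ((Matrix.finite_spectrum _).image _).bddAbove, iSup_image]
    rfl
  rw [specRad, hset, ← NNReal.coe_sSup, hrad, ENNReal.coe_toReal]

section

attribute [local instance] Matrix.linftyOpNormedRing Matrix.linftyOpNormedAlgebra

theorem specRad_eq_of_mul_one_submatrix {m n : Type*} [Fintype m] [Fintype n] [DecidableEq m]
    [DecidableEq n] {π : m → n} (hπ : Function.Surjective π) {M : Matrix m m ℝ}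
    {B : Matrix n n ℝ} (hM : ∀ a b, 0 ≤ M a b)
    (h : M * (1 : Matrix n n ℝ).submatrix π id = (1 : Matrix n n ℝ).submatrix π id * B) :
    specRad M = specRad B := by
  have hpow (k : ℕ) : ‖(M.map Complex.ofReal) ^ k‖₊ = ‖(B.map Complex.ofReal) ^ k‖₊ := by
    rw [map_ofReal_pow, map_ofReal_pow, linfty_opNNNorm_map_ofReal, linfty_opNNNorm_map_ofReal]
    exact linfty_opNNNorm_eq_of_mul_one_submatrix hπ (pow_apply_nonneg hM k)
      (pow_mul_eq_mul_pow_of_mul_eq h k)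
  rw [specRad_eq_toReal_spectralRadius, specRad_eq_toReal_spectralRadius,
    spectralRadius_eq_of_nnnorm_pow_eq hpow]

end

theorem stmt10_general (n t : ℕ) (M : Matrix (Fin n) (Fin n) ℝ) (B : Matrix (Fin t) (Fin t) ℝ)
    (hM : ∀ i j, 0 ≤ M i j)
    (π : Fin n → Fin t) (hsurj : Function.Surjective π)
    (hequitable : ∀ (a : Fin n) (j : Fin t),
      ∑ b ∈ Finset.univ.filter (fun b => π b = j), M a b = B (π a) j) :
    specRad M = specRad B :=
  specRad_eq_of_mul_one_submatrix hsurj hM (mul_one_submatrix_eq_of_sum_fiber hequitable)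

theorem stmt10 (n t : ℕ) (M : Matrix (Fin n) (Fin n) ℝ) (B : Matrix (Fin t) (Fin t) ℝ)
    (hM : ∀ i j, 0 ≤ M i j)
    (π : Fin n → Fin t) (hsurj : Function.Surjective π)
    (hequitable : ∀ (a : Fin n) (j : Fin t),
      ∑ b ∈ Finset.univ.filter (fun b => π b = j), M a b = B (π a) j)
    (hirr : ∀ i j : Fin t, ∃ k : ℕ, 0 < (B ^ k) i j) :
    specRad M = specRad B :=
  stmt10_general n t M B hM π hsurj hequitable
end

section
/- Let α ∈ [1/2, 1) and m₁ ≥ 0 an integer. Define h(α) = (m₁² + 2m₁ − 1)α⁴ + (−6m₁ − 4)α³ + (3m₁ + 14)α² − 12α + 3. If m₁ ≥ 3 then h is increasing on [1/2,1) and h(1/2) = (m₁² + 2m₁ − 1)/16 > 0, hence h(α) > 0 for all α ∈ [1/2,1). -/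
/-!
Substituting `m₁ = 3 + s` writes `h'(α)` as `4 s² α³ + 2 s α (16 α² - 9 α + 3) + c(α)` with
`c(α) = (α - 1/2)(56 α² - 38 α + 27) + 3/2`; each summand is nonnegative and `c` is positive
for `α ≥ 1/2`, so `h` is strictly increasing on `[1/2, ∞)`, and there it is bounded below by
`h(1/2) = (m₁² + 2 m₁ - 1) / 16 > 0`.
-/

noncomputable def hpoly (m₁ : ℕ) (α : ℝ) : ℝ :=
  ((m₁ : ℝ) ^ 2 + 2 * m₁ - 1) * α ^ 4 + (-6 * (m₁ : ℝ) - 4) * α ^ 3 +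
    (3 * (m₁ : ℝ) + 14) * α ^ 2 - 12 * α + 3

lemma hasDerivAt_hpoly (m₁ : ℕ) (x : ℝ) :
    HasDerivAt (hpoly m₁)
      (4 * ((m₁ : ℝ) ^ 2 + 2 * m₁ - 1) * x ^ 3 + 3 * (-6 * (m₁ : ℝ) - 4) * x ^ 2 +
        2 * (3 * (m₁ : ℝ) + 14) * x - 12) x := by
  have h := (((((hasDerivAt_pow 4 x).const_mul ((m₁ : ℝ) ^ 2 + 2 * m₁ - 1)).add
    ((hasDerivAt_pow 3 x).const_mul (-6 * (m₁ : ℝ) - 4))).add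
    ((hasDerivAt_pow 2 x).const_mul (3 * (m₁ : ℝ) + 14))).sub
    ((hasDerivAt_id x).const_mul 12)).add_const 3
  refine h.congr_deriv ?_
  push_cast
  ring

lemma hpoly_deriv_pos {t x : ℝ} (ht : 3 ≤ t) (hx : 1 / 2 ≤ x) :
    0 < 4 * (t ^ 2 + 2 * t - 1) * x ^ 3 + 3 * (-6 * t - 4) * x ^ 2 +
      2 * (3 * t + 14) * x - 12 := by
  obtain ⟨s, hs, rfl⟩ : ∃ s, 0 ≤ s ∧ t = 3 + s := ⟨t - 3, by linarith, by ring⟩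
  have hx0 : 0 < x := by linarith
  have hquad₁ : 0 < 16 * x ^ 2 - 9 * x + 3 := by nlinarith [sq_nonneg (x - 9 / 32)]
  have hquad₂ : 0 < 56 * x ^ 2 - 38 * x + 27 := by nlinarith [sq_nonneg (x - 19 / 56)]
  have hlin : 0 ≤ (x - 1 / 2) * (56 * x ^ 2 - 38 * x + 27) :=
    mul_nonneg (by linarith) hquad₂.le
  have hs₂ : 0 ≤ 4 * s ^ 2 * x ^ 3 := by positivity
  have hs₁ : 0 ≤ 2 * s * x * (16 * x ^ 2 - 9 * x + 3) := by positivity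
  linear_combination hs₂ + hs₁ + hlin

lemma hpoly_strictMonoOn (m₁ : ℕ) (hm : 3 ≤ m₁) :
    StrictMonoOn (hpoly m₁) (Set.Ici (1 / 2)) := by
  refine strictMonoOn_of_hasDerivWithinAt_pos (convex_Ici _)
    (fun x _ => (hasDerivAt_hpoly m₁ x).continuousAt.continuousWithinAt)
    (fun x _ => (hasDerivAt_hpoly m₁ x).hasDerivWithinAt) fun x hx => ?_
  rw [interior_Ici] at hx
  exact hpoly_deriv_pos (by exact_mod_cast hm) (le_of_lt hx)

lemma hpoly_one_half (m₁ : ℕ) : hpoly m₁ (1 / 2) = ((m₁ : ℝ) ^ 2 + 2 * m₁ - 1) / 16 := by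
  unfold hpoly
  ring

theorem stmt13 (m₁ : ℕ) (hm : 3 ≤ m₁) :
    StrictMonoOn (hpoly m₁) (Set.Ico (1 / 2 : ℝ) 1) ∧
    hpoly m₁ (1 / 2) = ((m₁ : ℝ) ^ 2 + 2 * m₁ - 1) / 16 ∧
    0 < ((m₁ : ℝ) ^ 2 + 2 * m₁ - 1) / 16 ∧
    ∀ α ∈ Set.Ico (1 / 2 : ℝ) 1, 0 < hpoly m₁ α := by
  have hmono := hpoly_strictMonoOn m₁ hm
  have hpos : 0 < ((m₁ : ℝ) ^ 2 + 2 * m₁ - 1) / 16 := by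
    have : (3 : ℝ) ≤ m₁ := by exact_mod_cast hm
    nlinarith
  refine ⟨hmono.mono Set.Ico_subset_Ici_self, hpoly_one_half m₁, hpos, fun α hα => ?_⟩
  calc 0 < hpoly m₁ (1 / 2) := hpoly_one_half m₁ ▸ hpos
    _ ≤ hpoly m₁ α := hmono.monotoneOn Set.self_mem_Ici hα.1 hα.1
end

section
/- Let G be a graph of order n with independence number i. Then for α ∈ [0,1), λ_α(G) ≤ λ_α(K_i^c ∨ K_{n−i}), with equality if and only if G ≅ K_i^c ∨ K_{n−i}. In particular, the unique graph with independence number n−4 maximizing the A_α spectral radius is K_{n−4}^c ∨ K_4. -/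
open scoped Classical

/-- The independence number of `G`: the maximum cardinality of an independent set. -/
noncomputable def indepNum {V : Type*} [Fintype V] (G : SimpleGraph V) : ℕ :=
  sSup {k : ℕ | ∃ s : Finset V, s.card = k ∧ ∀ a ∈ s, ∀ b ∈ s, ¬ G.Adj a b}

/-- The join `K_i^c ∨ K_j`: an independent set of `i` vertices, a clique of `j`
vertices, and all edges in between. -/
def joinCK (i j : ℕ) : SimpleGraph (Fin i ⊕ Fin j) :=
  SimpleGraph.fromRel (fun x y => x.isRight ∨ y.isRight)

/-!
Let `S` be a maximum independent set of `G`. Then `G` is a spanning subgraph of the complete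
graph with the edges inside `S` removed, which is `K_i^c ∨ K_{n-i}`. For `0 ≤ α ≤ 1` the matrix
`A_α` is entrywise nonnegative and monotone in the edge set, so for a top eigenvector `x` of
`A_α(G)` the Rayleigh quotient of `|x|` gives `λ_α(G) ≤ λ_α(K_i^c ∨ K_{n-i})`. At equality `|x|`
is a top eigenvector of the join, which is connected unless it is edgeless; as in
Perron–Frobenius `|x|` is then positive everywhere, and two entrywise comparable quadratic forms
agreeing at a positive vector have equal matrices. Since `α < 1` the adjacency part of `A_α` is
visible, so `G` is the join itself.
-/

open Matrix

section SpectralRadius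

variable {V : Type*} [Fintype V] {M N : Matrix V V ℝ} {l r : ℝ}

lemma IsSpectralRadius.unique (hl : IsSpectralRadius M l) (hr : IsSpectralRadius M r) : l = r :=
  le_antisymm (hr.2 l hl.1) (hl.2 r hr.1)

lemma exists_eigenvector_submatrix_equiv_iff {W : Type*} [Fintype W] {M : Matrix W W ℝ}
    (e : V ≃ W) (μ : ℝ) :
    (∃ x, x ≠ 0 ∧ M.submatrix e e *ᵥ x = μ • x) ↔ ∃ y, y ≠ 0 ∧ M *ᵥ y = μ • y := by
  constructor
  · rintro ⟨x, hx0, hx⟩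
    rw [submatrix_mulVec_equiv] at hx
    refine ⟨x ∘ e.symm, fun h => hx0 ?_, ?_⟩
    · ext v; simpa using congrFun h (e v)
    · ext w; simpa using congrFun hx (e.symm w)
  · rintro ⟨y, hy0, hy⟩
    refine ⟨y ∘ e, fun h => hy0 ?_, ?_⟩
    · ext w; simpa using congrFun h (e.symm w)
    · rw [submatrix_mulVec_equiv, Function.comp_assoc, e.self_comp_symm, Function.comp_id, hy]
      rfl

lemma isSpectralRadius_submatrix_equiv_iff {W : Type*} [Fintype W] {M : Matrix W W ℝ}
    (e : V ≃ W) : IsSpectralRadius (M.submatrix e e) l ↔ IsSpectralRadius M l := by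
  simp only [IsSpectralRadius, exists_eigenvector_submatrix_equiv_iff]

lemma Matrix.IsHermitian.eigenvalues_le (hN : N.IsHermitian) (hr : IsSpectralRadius N r) (k : V) :
    hN.eigenvalues k ≤ r := by
  refine hr.2 _ ⟨hN.eigenvectorBasis k, fun h => ?_, by simpa using hN.mulVec_eigenvectorBasis k⟩
  exact hN.eigenvectorBasis.orthonormal.ne_zero k (by ext v; exact congrFun h v)

lemma IsSpectralRadius.posSemidef_smul_one_sub_s15 (hN : N.IsHermitian) (hr : IsSpectralRadius N r) :
    (r • 1 - N).PosSemidef := by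
  rw [posSemidef_iff_isHermitian_and_spectrum_nonneg]
  refine ⟨((isHermitian_one).smul (IsSelfAdjoint.all r)).sub hN, ?_⟩
  rw [← Algebra.algebraMap_eq_smul_one, ← spectrum.singleton_sub_eq,
    hN.spectrum_real_eq_range_eigenvalues]
  rintro _ ⟨_, rfl, _, ⟨k, rfl⟩, rfl⟩
  simpa using hN.eigenvalues_le hr k

lemma star_dotProduct_smul_one_sub_mulVec (z : V → ℝ) :
    star z ⬝ᵥ (r • 1 - N) *ᵥ z = r * (z ⬝ᵥ z) - z ⬝ᵥ N *ᵥ z := by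
  simp [sub_mulVec, smul_mulVec, dotProduct_sub]

lemma IsSpectralRadius.dotProduct_mulVec_le_s15 (hN : N.IsHermitian) (hr : IsSpectralRadius N r)
    (z : V → ℝ) : z ⬝ᵥ N *ᵥ z ≤ r * (z ⬝ᵥ z) := by
  have := (hr.posSemidef_smul_one_sub_s15 hN).dotProduct_mulVec_nonneg z
  rw [star_dotProduct_smul_one_sub_mulVec] at this
  linarith

lemma IsSpectralRadius.mulVec_eq_smul_of_dotProduct_mulVec_eq (hN : N.IsHermitian)
    (hr : IsSpectralRadius N r) {z : V → ℝ} (hz : z ⬝ᵥ N *ᵥ z = r * (z ⬝ᵥ z)) :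
    N *ᵥ z = r • z := by
  have := ((hr.posSemidef_smul_one_sub_s15 hN).dotProduct_mulVec_zero_iff z).mp
    (by rw [star_dotProduct_smul_one_sub_mulVec, hz, sub_self])
  rw [sub_mulVec, smul_mulVec, one_mulVec, sub_eq_zero] at this
  exact this.symm

lemma dotProduct_mulVec_le_abs (hM : ∀ i j, 0 ≤ M i j) (x : V → ℝ) :
    x ⬝ᵥ M *ᵥ x ≤ |x| ⬝ᵥ M *ᵥ |x| := by
  simp only [dotProduct, mulVec, Finset.mul_sum, Pi.abs_apply]
  refine Finset.sum_le_sum fun i _ => Finset.sum_le_sum fun j _ => ?_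
  calc x i * (M i j * x j) ≤ |x i * (M i j * x j)| := le_abs_self _
    _ = |x i| * (M i j * |x j|) := by rw [abs_mul, abs_mul, abs_of_nonneg (hM i j)]

lemma dotProduct_mulVec_mono (hMN : ∀ i j, M i j ≤ N i j) {y : V → ℝ} (hy : 0 ≤ y) :
    y ⬝ᵥ M *ᵥ y ≤ y ⬝ᵥ N *ᵥ y := by
  simp only [dotProduct, mulVec, Finset.mul_sum]
  gcongr with i _ j _
  · exact hy i
  · exact hy j
  · exact hMN i j

lemma abs_dotProduct_abs (x : V → ℝ) : |x| ⬝ᵥ |x| = x ⬝ᵥ x := by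
  simp [dotProduct, abs_mul_abs_self]

lemma mul_dotProduct_self_le_abs (hM : ∀ i j, 0 ≤ M i j) {x : V → ℝ} (hx : M *ᵥ x = l • x) :
    l * (x ⬝ᵥ x) ≤ |x| ⬝ᵥ M *ᵥ |x| := by
  calc l * (x ⬝ᵥ x) = x ⬝ᵥ M *ᵥ x := by rw [hx, dotProduct_smul, smul_eq_mul]
    _ ≤ |x| ⬝ᵥ M *ᵥ |x| := dotProduct_mulVec_le_abs hM x

theorem IsSpectralRadius.le_of_le (hM : ∀ i j, 0 ≤ M i j) (hMN : ∀ i j, M i j ≤ N i j)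
    (hN : N.IsHermitian) (hl : IsSpectralRadius M l) (hr : IsSpectralRadius N r) : l ≤ r := by
  obtain ⟨x, hx0, hx⟩ := hl.1
  have hxx : 0 < x ⬝ᵥ x := dotProduct_self_star_pos_iff.mpr hx0
  refine le_of_mul_le_mul_right ?_ hxx
  calc l * (x ⬝ᵥ x) ≤ |x| ⬝ᵥ M *ᵥ |x| := mul_dotProduct_self_le_abs hM hx
    _ ≤ |x| ⬝ᵥ N *ᵥ |x| := dotProduct_mulVec_mono hMN (abs_nonneg x)
    _ ≤ r * (|x| ⬝ᵥ |x|) := hr.dotProduct_mulVec_le_s15 hN |x|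
    _ = r * (x ⬝ᵥ x) := by rw [abs_dotProduct_abs]

theorem IsSpectralRadius.exists_nonneg_eigenvector_of_eq (hM : ∀ i j, 0 ≤ M i j)
    (hMN : ∀ i j, M i j ≤ N i j) (hN : N.IsHermitian) (hl : IsSpectralRadius M r)
    (hr : IsSpectralRadius N r) :
    ∃ y, 0 ≤ y ∧ y ≠ 0 ∧ N *ᵥ y = r • y ∧ y ⬝ᵥ M *ᵥ y = y ⬝ᵥ N *ᵥ y := by
  obtain ⟨x, hx0, hx⟩ := hl.1
  have h1 := mul_dotProduct_self_le_abs hM hx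
  have h2 := dotProduct_mulVec_mono hMN (abs_nonneg x)
  have h3 := hr.dotProduct_mulVec_le_s15 hN |x|
  rw [abs_dotProduct_abs] at h3
  refine ⟨|x|, abs_nonneg x, fun h => hx0 (funext fun v => by simpa using congrFun h v),
    hr.mulVec_eq_smul_of_dotProduct_mulVec_eq hN ?_, by linarith⟩
  rw [abs_dotProduct_abs]
  linarith

lemma pos_of_mulVec_eq_smul (hN : ∀ i j, 0 ≤ N i j) {y : V → ℝ} (hy : 0 ≤ y)
    (hNy : N *ᵥ y = r • y) {i j : V} (hij : 0 < N i j) (hj : 0 < y j) : 0 < y i := by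
  have hlow : N i j * y j ≤ (N *ᵥ y) i :=
    Finset.single_le_sum (f := fun k => N i k * y k)
      (fun k _ => mul_nonneg (hN i k) (hy k)) (Finset.mem_univ j)
  rw [hNy, Pi.smul_apply, smul_eq_mul] at hlow
  by_contra hi
  rw [le_antisymm (not_lt.mp hi) (hy i), mul_zero] at hlow
  exact (mul_pos hij hj).not_ge hlow

lemma eq_of_dotProduct_mulVec_eq (hMN : ∀ i j, M i j ≤ N i j) {y : V → ℝ} (hy : ∀ i, 0 < y i)
    (h : y ⬝ᵥ M *ᵥ y = y ⬝ᵥ N *ᵥ y) : M = N := by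
  have hterm : ∀ i j, 0 ≤ y i * ((N i j - M i j) * y j) := fun i j =>
    mul_nonneg (hy i).le (mul_nonneg (sub_nonneg.mpr (hMN i j)) (hy j).le)
  have hsum : ∑ i, ∑ j, y i * ((N i j - M i j) * y j) = 0 := by
    simp only [← Finset.mul_sum, sub_mul, Finset.sum_sub_distrib, mul_sub]
    simp only [dotProduct, mulVec] at h
    rw [← h, sub_self]
  ext i j
  have := (Finset.sum_eq_zero_iff_of_nonneg fun j _ => hterm i j).mp
    ((Finset.sum_eq_zero_iff_of_nonneg fun i _ => Finset.sum_nonneg fun j _ => hterm i j).mp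
      hsum i (Finset.mem_univ i)) j (Finset.mem_univ j)
  have := (mul_eq_zero.mp this).resolve_left (hy i).ne'
  linarith [(mul_eq_zero.mp this).resolve_right (hy j).ne']

end SpectralRadius

section Aalpha

variable {V W : Type*} [Fintype V] [Fintype W] {G H : SimpleGraph V} {α r : ℝ}

lemma Aalpha_apply (G : SimpleGraph V) (α : ℝ) (u v : V) :
    Aalpha G α u v = α * (if u = v then (G.degree u : ℝ) else 0) +
      (1 - α) * (if G.Adj u v then 1 else 0) := by
  simp [Aalpha, diagonal_apply]

lemma Aalpha_apply_of_ne {u v : V} (h : u ≠ v) :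
    Aalpha G α u v = if G.Adj u v then 1 - α else 0 := by
  simp [Aalpha_apply, h]

lemma isHermitian_Aalpha (G : SimpleGraph V) (α : ℝ) : (Aalpha G α).IsHermitian :=
  ((G.isHermitian_degMatrix ℝ).smul (IsSelfAdjoint.all α)).add
    ((G.isHermitian_adjMatrix ℝ).smul (IsSelfAdjoint.all (1 - α)))

lemma Aalpha_nonneg (G : SimpleGraph V) (hα0 : 0 ≤ α) (hα1 : α ≤ 1) (u v : V) :
    0 ≤ Aalpha G α u v := by
  rw [Aalpha_apply]
  have : 0 ≤ 1 - α := by linarith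
  positivity

lemma Aalpha_le_Aalpha (h : G ≤ H) (hα0 : 0 ≤ α) (hα1 : α ≤ 1) (u v : V) :
    Aalpha G α u v ≤ Aalpha H α u v := by
  rw [Aalpha_apply, Aalpha_apply]
  gcongr
  · split_ifs
    · exact_mod_cast G.degree_le_of_le h
    · rfl
  · split_ifs with hG hH <;> first | exact absurd (h hG) hH | norm_num

lemma Aalpha_pos_of_adj (hα1 : α < 1) {u v : V} (h : G.Adj u v) : 0 < Aalpha G α u v := by
  rw [Aalpha_apply_of_ne h.ne, if_pos h]
  linarith

lemma Aalpha_injective (hα1 : α ≠ 1) (h : Aalpha G α = Aalpha H α) : G = H := by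
  ext u v
  by_cases huv : u = v
  · simp [huv]
  · have := congrFun (congrFun h u) v
    rw [Aalpha_apply_of_ne huv, Aalpha_apply_of_ne huv] at this
    have : 1 - α ≠ 0 := sub_ne_zero.mpr (Ne.symm hα1)
    split_ifs at * <;> simp_all

lemma submatrix_Aalpha {H : SimpleGraph W} (e : G ≃g H) (α : ℝ) :
    (Aalpha H α).submatrix e e = Aalpha G α := by
  ext u v
  simp [Aalpha_apply, SimpleGraph.Iso.map_adj_iff]

lemma isSpectralRadius_Aalpha_iff {H : SimpleGraph W} (e : G ≃g H) :
    IsSpectralRadius (Aalpha G α) r ↔ IsSpectralRadius (Aalpha H α) r := by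
  rw [← submatrix_Aalpha e]
  exact isSpectralRadius_submatrix_equiv_iff e.toEquiv

theorem isSpectralRadius_Aalpha_mono (h : G ≤ H) (hα0 : 0 ≤ α) (hα1 : α ≤ 1) {l : ℝ}
    (hG : IsSpectralRadius (Aalpha G α) l) (hH : IsSpectralRadius (Aalpha H α) r) : l ≤ r :=
  hG.le_of_le (Aalpha_nonneg G hα0 hα1) (Aalpha_le_Aalpha h hα0 hα1) (isHermitian_Aalpha H α) hH

lemma SimpleGraph.Connected.pos_of_Aalpha_mulVec_eq_smul (hG : G.Connected) (hα0 : 0 ≤ α)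
    (hα1 : α < 1) {y : V → ℝ} (hy : 0 ≤ y) (hy0 : y ≠ 0) (hGy : Aalpha G α *ᵥ y = r • y)
    (v : V) : 0 < y v := by
  obtain ⟨u, hu⟩ := Function.ne_iff.mp hy0
  have hyu : 0 < y u := (hy u).lt_of_ne (Ne.symm hu)
  obtain ⟨p⟩ := hG.preconnected v u
  induction p with
  | nil => exact hyu
  | cons hadj _ ih =>
    exact pos_of_mulVec_eq_smul (Aalpha_nonneg G hα0 hα1.le) hy hGy (Aalpha_pos_of_adj hα1 hadj)
      (ih hu hyu)

theorem eq_of_le_of_isSpectralRadius_Aalpha (h : G ≤ H) (hH : H.Connected) (hα0 : 0 ≤ α)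
    (hα1 : α < 1) (hG : IsSpectralRadius (Aalpha G α) r)
    (hHr : IsSpectralRadius (Aalpha H α) r) : G = H := by
  obtain ⟨y, hy, hy0, hHy, hyGH⟩ := hG.exists_nonneg_eigenvector_of_eq (Aalpha_nonneg G hα0 hα1.le)
    (Aalpha_le_Aalpha h hα0 hα1.le) (isHermitian_Aalpha H α) hHr
  exact Aalpha_injective hα1.ne (eq_of_dotProduct_mulVec_eq (Aalpha_le_Aalpha h hα0 hα1.le)
    (hH.pos_of_Aalpha_mulVec_eq_smul hα0 hα1 hy hy0 hHy) hyGH)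

end Aalpha

section CompleteSplit

variable {V W : Type*}

def completeSplit (S : Set V) : SimpleGraph V where
  Adj u v := u ≠ v ∧ (u ∉ S ∨ v ∉ S)
  symm := ⟨fun _ _ h => ⟨h.1.symm, h.2.symm⟩⟩
  loopless := ⟨fun _ h => h.1 rfl⟩

variable {S : Set V}

@[simp]
lemma completeSplit_adj {u v : V} : (completeSplit S).Adj u v ↔ u ≠ v ∧ (u ∉ S ∨ v ∉ S) :=
  Iff.rfl

lemma le_completeSplit {G : SimpleGraph V} (hS : ∀ a ∈ S, ∀ b ∈ S, ¬ G.Adj a b) :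
    G ≤ completeSplit S := fun u v h =>
  completeSplit_adj.mpr ⟨h.ne, by by_contra! hc; exact hS u hc.1 v hc.2 h⟩

lemma completeSplit_eq_bot (hS : ∀ v, v ∈ S) : completeSplit S = ⊥ := by
  ext u v
  simp [hS]

lemma completeSplit_connected {v₀ : V} (hv₀ : v₀ ∉ S) : (completeSplit S).Connected := by
  have hreach : ∀ u, (completeSplit S).Reachable u v₀ := fun u => by
    by_cases hu : u = v₀
    · exact hu ▸ .refl u
    · exact SimpleGraph.Adj.reachable (completeSplit_adj.mpr ⟨hu, Or.inr hv₀⟩)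
  have : Nonempty V := ⟨v₀⟩
  exact .mk fun u v => (hreach u).trans (hreach v).symm

def completeSplitIso {T : Set W} (e : V ≃ W) (he : ∀ v, e v ∈ T ↔ v ∈ S) :
    completeSplit S ≃g completeSplit T where
  toEquiv := e
  map_rel_iff' := by simp [he]

lemma joinCK_eq_completeSplit (i j : ℕ) : joinCK i j = completeSplit {x | x.isLeft} := by
  ext x y
  simp only [joinCK, SimpleGraph.fromRel_adj, completeSplit_adj, Set.mem_ofPred_eq,
    Sum.not_isLeft]
  tauto

lemma nonempty_completeSplit_iso_joinCK [Fintype V] (S : Finset V) {n i : ℕ}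
    (hn : Fintype.card V = n) (hi : S.card = i) :
    Nonempty (completeSplit (S : Set V) ≃g joinCK i (n - i)) := by
  classical
  have eS : S ≃ Fin i := Fintype.equivFinOfCardEq (by simpa using hi)
  have eC : {v // v ∉ S} ≃ Fin (n - i) := Fintype.equivFinOfCardEq <| by
    rw [Fintype.card_subtype_compl, Fintype.card_coe, hn, hi]
  let e : V ≃ Fin i ⊕ Fin (n - i) := (Equiv.sumCompl (· ∈ S)).symm.trans (eS.sumCongr eC)
  rw [joinCK_eq_completeSplit]
  refine ⟨completeSplitIso e fun v => ?_⟩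
  by_cases hv : v ∈ S <;> simp [e, hv]

end CompleteSplit

lemma exists_finset_card_eq_indepNum {V : Type*} [Fintype V] (G : SimpleGraph V) :
    ∃ s : Finset V, s.card = indepNum G ∧ ∀ a ∈ s, ∀ b ∈ s, ¬ G.Adj a b := by
  refine Nat.sSup_mem (s := {k | ∃ s : Finset V, s.card = k ∧ ∀ a ∈ s, ∀ b ∈ s, ¬ G.Adj a b}) ?_ ?_
  · exact ⟨0, ∅, by simp⟩
  · exact ⟨Fintype.card V, fun _ ⟨s, hs, _⟩ => hs ▸ s.card_le_univ⟩

lemma eq_completeSplit_of_isSpectralRadius_Aalpha {V : Type*} [Fintype V] {G : SimpleGraph V}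
    {S : Set V} (hS : ∀ a ∈ S, ∀ b ∈ S, ¬ G.Adj a b) {α r : ℝ} (hα0 : 0 ≤ α) (hα1 : α < 1)
    (hG : IsSpectralRadius (Aalpha G α) r)
    (hSr : IsSpectralRadius (Aalpha (completeSplit S) α) r) : G = completeSplit S := by
  by_cases hSuniv : ∀ v, v ∈ S
  · have hbot := completeSplit_eq_bot hSuniv
    rw [hbot, ← le_bot_iff, ← hbot]
    exact le_completeSplit hS
  · obtain ⟨v₀, hv₀⟩ := not_forall.mp hSuniv
    exact eq_of_le_of_isSpectralRadius_Aalpha (le_completeSplit hS) (completeSplit_connected hv₀)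
      hα0 hα1 hG hSr

theorem stmt15_general {V : Type*} [Fintype V] (G : SimpleGraph V) (n i : ℕ)
    (hn : Fintype.card V = n) (hi : indepNum G = i)
    (α : ℝ) (hα : α ∈ Set.Ico (0 : ℝ) 1)
    (lam lamJ : ℝ) (hlam : IsSpectralRadius (Aalpha G α) lam)
    (hlamJ : IsSpectralRadius (Aalpha (joinCK i (n - i)) α) lamJ) :
    lam ≤ lamJ ∧ (lam = lamJ ↔ Nonempty (G ≃g joinCK i (n - i))) := by
  obtain ⟨hα0, hα1⟩ := hα
  obtain ⟨S, hScard, hS⟩ := exists_finset_card_eq_indepNum G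
  obtain ⟨e⟩ := nonempty_completeSplit_iso_joinCK S hn (hScard.trans hi)
  have hSJ : IsSpectralRadius (Aalpha (completeSplit (S : Set V)) α) lamJ :=
    (isSpectralRadius_Aalpha_iff e).mpr hlamJ
  refine ⟨isSpectralRadius_Aalpha_mono (le_completeSplit hS) hα0 hα1.le hlam hSJ, ?_, ?_⟩
  · rintro rfl
    rw [eq_completeSplit_of_isSpectralRadius_Aalpha hS hα0 hα1 hlam hSJ]
    exact ⟨e⟩
  · rintro ⟨e'⟩
    exact ((isSpectralRadius_Aalpha_iff e').mp hlam).unique hlamJ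

theorem stmt15 {V : Type*} [Fintype V] (G : SimpleGraph V) (n i : ℕ)
    (hn : Fintype.card V = n) (hi : indepNum G = i) (hin : i ≤ n)
    (α : ℝ) (hα : α ∈ Set.Ico (0 : ℝ) 1)
    (lam lamJ : ℝ) (hlam : IsSpectralRadius (Aalpha G α) lam)
    (hlamJ : IsSpectralRadius (Aalpha (joinCK i (n - i)) α) lamJ) :
    lam ≤ lamJ ∧ (lam = lamJ ↔ Nonempty (G ≃g joinCK i (n - i))) :=
  stmt15_general G n i hn hi α hα lam lamJ hlam hlamJ
end

section
/- For α ∈ [1/2, 1) and any real x ≥ 2α, the polynomial x·[(−α³ + 2α² − α)x² + (2α⁴ − 2α³ − 3α² + 4α − 1)x − 4α⁴ + 10α³ − 8α² + 2α] is ≤ 0. -/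
theorem stmt17 (α : ℝ) (hα : α ∈ Set.Ico (1 / 2 : ℝ) 1) (x : ℝ) (hx : 2 * α ≤ x) :
    x * ((-α ^ 3 + 2 * α ^ 2 - α) * x ^ 2 +
        (2 * α ^ 4 - 2 * α ^ 3 - 3 * α ^ 2 + 4 * α - 1) * x -
        4 * α ^ 4 + 10 * α ^ 3 - 8 * α ^ 2 + 2 * α) ≤ 0 := by
  obtain ⟨h1, h2⟩ := hα
  have hx0 : (0:ℝ) ≤ x := by nlinarith
  have hfac : (0:ℝ) ≤ α * x - (2 * α - 1) := by nlinarith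
  have key : (-α ^ 3 + 2 * α ^ 2 - α) * x ^ 2 +
        (2 * α ^ 4 - 2 * α ^ 3 - 3 * α ^ 2 + 4 * α - 1) * x -
        4 * α ^ 4 + 10 * α ^ 3 - 8 * α ^ 2 + 2 * α
      = -(α - 1) ^ 2 * (x - 2 * α) * (α * x - (2 * α - 1)) := by ring
  rw [key]
  have := mul_nonneg (mul_nonneg (mul_nonneg hx0 (sq_nonneg (α - 1))) (by linarith : (0:ℝ) ≤ x - 2 * α)) hfac
  nlinarith [this]
end
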